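/- arXiv:1003.1844 — 2 statements merged into one kernel-verified Lean document; each statement's English description precedes it below -/
import Mathlib

section
/- Let R be a field, Γ a group with Hom(Γ,R) = 0 (no nontrivial group homomorphisms from Γ to the additive group of R), and V an R[Γ]-module. Then for every q ≥ 0, the higher order invariants H⁰_q(Γ,V) = {v : I^{q+1}v = 0} coincide with the ordinary invariants V^Γ. -/
open MonoidAlgebra

/-- The augmentation ideal of `R[Γ]`, as an `R`-submodule. -/
noncomputable def augIdeal (R Γ : Type*) [CommRing R] [Group Γ] :
    Submodule R (MonoidAlgebra R Γ) :=
  (RingHom.ker ((MonoidAlgebra.lift R R Γ) 1).toRingHom).restrictScalars R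

/-- The invariants of order `q`: `H⁰_q(Γ,V) = {v ∈ V : I^{q+1} v = 0}`. -/
noncomputable def ordInv (R Γ : Type*) [CommRing R] [Group Γ]
    (V : Type*) [AddCommGroup V] [Module (MonoidAlgebra R Γ) V]
    [Module R V] [SMulCommClass (MonoidAlgebra R Γ) R V] (q : ℕ) :
    Submodule R V where
  carrier := {v | ∀ x ∈ (augIdeal R Γ) ^ (q + 1), x • v = 0}
  add_mem' := fun {a b} ha hb x hx => by rw [smul_add, ha x hx, hb x hx, add_zero]
  zero_mem' := fun x _ => smul_zero x
  smul_mem' := fun r v hv x hx => by rw [smul_comm, hv x hx, smul_zero]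

/-! Over a field, `I / I²` is separated by linear functionals, and a functional killing `I²`
turns `γ ↦ γ - 1` into a homomorphism `Γ → (R, +)`, because
`γδ - 1 = (γ - 1)(δ - 1) + (γ - 1) + (δ - 1)`. With `Hom(Γ, R) = 0` every such functional
vanishes on the generators `γ - 1` of `I`, so `I = I²` and hence `I^{q+1} = I`; and `v` is killed
by `I` exactly when every `γ - 1` kills it. -/

namespace augIdeal

section CommRing

variable {R Γ : Type*} [CommRing R] [Group Γ]

lemma mem_iff (x : MonoidAlgebra R Γ) :
    x ∈ augIdeal R Γ ↔ MonoidAlgebra.lift R R Γ 1 x = 0 :=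
  Iff.rfl

lemma of_sub_one_mem (γ : Γ) : of R Γ γ - 1 ∈ augIdeal R Γ := by
  simp [mem_iff]

lemma eq_span : augIdeal R Γ = Submodule.span R (Set.range fun γ : Γ ↦ of R Γ γ - 1) := by
  refine le_antisymm (fun x hx ↦ ?_) (Submodule.span_le.2 <| Set.range_subset_iff.2 of_sub_one_mem)
  have hsub : ∀ y : MonoidAlgebra R Γ, y - algebraMap R _ (MonoidAlgebra.lift R R Γ 1 y) ∈
      Submodule.span R (Set.range fun γ : Γ ↦ of R Γ γ - 1) := by
    intro y
    induction y using MonoidAlgebra.induction_linear with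
    | zero => simp
    | add y z hy hz =>
      simpa only [map_add, add_sub_add_comm] using Submodule.add_mem _ hy hz
    | single γ r =>
      have : single γ r - algebraMap R _ (MonoidAlgebra.lift R R Γ 1 (single γ r)) =
          r • (of R Γ γ - 1) := by
        simp [smul_sub, Algebra.algebraMap_eq_smul_one]
      rw [this]
      exact Submodule.smul_mem _ r (Submodule.subset_span ⟨γ, rfl⟩)
  simpa [(mem_iff x).1 hx] using hsub x

lemma sq_le : augIdeal R Γ ^ 2 ≤ augIdeal R Γ :=
  pow_two (augIdeal R Γ) ▸ Submodule.mul_le.2 fun x hx y _ ↦ by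
    rw [mem_iff, map_mul, (mem_iff x).1 hx, zero_mul]

lemma mul_mem_sq {x y : MonoidAlgebra R Γ} (hx : x ∈ augIdeal R Γ) (hy : y ∈ augIdeal R Γ) :
    x * y ∈ augIdeal R Γ ^ 2 :=
  pow_two (augIdeal R Γ) ▸ Submodule.mul_mem_mul hx hy

noncomputable def dualToAddHom (f : Module.Dual R (MonoidAlgebra R Γ))
    (hf : ∀ x ∈ augIdeal R Γ ^ 2, f x = 0) : Additive Γ →+ R :=
  AddMonoidHom.mk' (fun γ ↦ f (of R Γ γ.toMul - 1)) fun γ δ ↦ by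
    have hprod : of R Γ (γ + δ).toMul - 1 =
        (of R Γ γ.toMul - 1) * (of R Γ δ.toMul - 1) + (of R Γ γ.toMul - 1) +
          (of R Γ δ.toMul - 1) := by
      rw [toMul_add, map_mul]; noncomm_ring
    rw [hprod, map_add, map_add, hf _ (mul_mem_sq (of_sub_one_mem _) (of_sub_one_mem _)),
      zero_add]

lemma forall_smul_eq_zero_iff {V : Type*} [AddCommGroup V] [Module (MonoidAlgebra R Γ) V]
    (v : V) : (∀ x ∈ augIdeal R Γ, x • v = 0) ↔ ∀ γ : Γ, of R Γ γ • v = v := by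
  refine ⟨fun h γ ↦ ?_, fun h x hx ↦ ?_⟩
  · simpa [sub_smul, sub_eq_zero] using h _ (of_sub_one_mem γ)
  · rw [eq_span] at hx
    induction hx using Submodule.span_induction with
    | mem y hy =>
      obtain ⟨γ, rfl⟩ := hy
      rw [sub_smul, one_smul, h γ, sub_self]
    | zero => exact zero_smul _ v
    | add y z _ _ hy hz => rw [add_smul, hy, hz, add_zero]
    | smul r y _ hy => rw [Algebra.smul_def, mul_smul, hy, smul_zero]

end CommRing

variable {R Γ : Type*} [Field R] [Group Γ]

lemma le_sq (hHom : ∀ f : Additive Γ →+ R, f = 0) : augIdeal R Γ ≤ augIdeal R Γ ^ 2 := by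
  refine eq_span.trans_le <| Submodule.span_le.2 <| Set.range_subset_iff.2 fun γ ↦ ?_
  by_contra hγ
  obtain ⟨f, hfγ, hf⟩ := Submodule.exists_dual_map_eq_bot_of_notMem hγ inferInstance
  have hf' : ∀ x ∈ augIdeal R Γ ^ 2, f x = 0 := fun x hx ↦
    (Submodule.mem_bot R).1 (hf ▸ Submodule.mem_map_of_mem hx)
  exact hfγ (DFunLike.congr_fun (hHom (dualToAddHom f hf')) (Additive.ofMul γ))

lemma pow_succ_eq (hHom : ∀ f : Additive Γ →+ R, f = 0) (n : ℕ) :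
    augIdeal R Γ ^ (n + 1) = augIdeal R Γ :=
  IsIdempotentElem.pow_succ_eq n <| by
    rw [IsIdempotentElem, ← pow_two]
    exact sq_le.antisymm (le_sq hHom)

end augIdeal

/-- If `R` is a field and there are no nontrivial group
homomorphisms `Γ → (R,+)`, then for every `q ≥ 0` the higher order invariants
`H⁰_q(Γ,V) = {v : I^{q+1} v = 0}` coincide with the ordinary invariants
`V^Γ = {v : γ v = v for all γ}`. -/
theorem stmt4 (R Γ : Type*) [Field R] [Group Γ]
    (hHom : ∀ f : Additive Γ →+ R, f = 0)
    (V : Type*) [AddCommGroup V] [Module (MonoidAlgebra R Γ) V]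
    [Module R V] [SMulCommClass (MonoidAlgebra R Γ) R V]
    (q : ℕ) :
    (ordInv R Γ V q : Set V) = {v : V | ∀ γ : Γ, MonoidAlgebra.of R Γ γ • v = v} := by
  ext v
  change (∀ x ∈ augIdeal R Γ ^ (q + 1), x • v = 0) ↔ _
  rw [augIdeal.pow_succ_eq hHom q]
  exact augIdeal.forall_smul_eq_zero_iff v
end

section
/- Let G be a locally compact group and Γ a countable discrete subgroup admitting a measurable fundamental set. Then Γ\G is compact if and only if there exists a relatively compact measurable fundamental set F ⊆ G (i.e., one with compact closure). -/
/-- `F` is a fundamental set for the left translation action of `Γ` on `G`: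
a measurable set containing exactly one point of every orbit `Γx`. -/
def IsFundamentalSet {G : Type*} [Group G] [MeasurableSpace G]
    (Γ : Subgroup G) (F : Set G) : Prop :=
  MeasurableSet F ∧ ∀ x : G, ∃! y : G, y ∈ F ∧ ∃ γ ∈ Γ, y = γ * x

/-!
Since `π : G → Γ\G` is open and `G` is locally compact, compactness of `Γ\G` lets finitely many
images of compact neighbourhoods cover it, which yields a compact `K ⊆ G` meeting every orbit.
Translating each point of a given fundamental set into `K` produces a fundamental set inside the
closure of `K`. Conversely, `π` maps the closure of a fundamental set onto `Γ\G`.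
-/

open Set

theorem IsOpenMap.exists_isCompact_image_eq_univ {X Y : Type*} [TopologicalSpace X]
    [TopologicalSpace Y] [WeaklyLocallyCompactSpace X] [CompactSpace Y] {f : X → Y}
    (hf : IsOpenMap f) (hsurj : Function.Surjective f) : ∃ K, IsCompact K ∧ f '' K = univ := by
  choose s hs hsx using fun x : X => exists_compact_mem_nhds x
  obtain ⟨I, hI⟩ := isCompact_univ.elim_finite_subcover (fun x => f '' interior (s x))
    (fun x => hf _ isOpen_interior) fun y _ => by
      obtain ⟨x, rfl⟩ := hsurj y
      exact mem_iUnion.2 ⟨x, mem_image_of_mem f (mem_interior_iff_mem_nhds.2 (hsx x))⟩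
  refine ⟨⋃ x ∈ I, s x, I.isCompact_biUnion fun x _ => hs x, eq_univ_of_univ_subset ?_⟩
  refine hI.trans ?_
  rw [image_iUnion₂]
  exact iUnion₂_mono fun x _ => image_mono interior_subset

theorem QuotientGroup.exists_mul_mem_of_image_mk_eq_univ {G : Type*} [Group G]
    {Γ : Subgroup G} {K : Set G} (hK : Quotient.mk (QuotientGroup.rightRel Γ) '' K = univ)
    (x : G) : ∃ γ ∈ Γ, γ * x ∈ K := by
  obtain ⟨y, hy, hyx⟩ := hK.symm ▸ mem_univ (Quotient.mk _ x)
  exact ⟨y * x⁻¹, QuotientGroup.rightRel_apply.1 (Quotient.exact hyx.symm),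
    by simpa using hy⟩

namespace IsFundamentalSet

variable {G : Type*} [Group G] [MeasurableSpace G] {Γ : Subgroup G} {F₀ : Set G}

theorem eq_of_mem (hF₀ : IsFundamentalSet Γ F₀) {y z : G} (hy : y ∈ F₀) (hz : z ∈ F₀)
    (hzy : z * y⁻¹ ∈ Γ) : z = y :=
  (hF₀.2 y).unique ⟨hz, z * y⁻¹, hzy, by group⟩ ⟨hy, 1, Γ.one_mem, by group⟩

theorem image_mk_eq_univ (hF₀ : IsFundamentalSet Γ F₀) :
    Quotient.mk (QuotientGroup.rightRel Γ) '' F₀ = univ := by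
  refine eq_univ_of_forall fun q => ?_
  induction q using Quotient.inductionOn with | h x => ?_
  obtain ⟨y, ⟨hy, γ, hγ, rfl⟩, -⟩ := hF₀.2 x
  exact ⟨γ * x, hy, Quotient.sound (QuotientGroup.rightRel_apply.2 (by simpa using hγ))⟩

/-- For an enumeration `e` of `Γ`, each `f₀ ∈ F₀` is replaced by `e n * f₀` with `n` least
such that this lies in `K`. -/
theorem exists_subset [MeasurableMul G] [Countable Γ] (hF₀ : IsFundamentalSet Γ F₀)
    {K : Set G} (hK : MeasurableSet K) (hKrep : ∀ x : G, ∃ γ ∈ Γ, γ * x ∈ K) :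
    ∃ F ⊆ K, IsFundamentalSet Γ F := by
  obtain ⟨e, he⟩ := exists_surjective_nat Γ
  let S : ℕ → Set G := fun n => F₀ ∩ ⋂ m < n, (e m * ·) ⁻¹' Kᶜ
  refine ⟨K ∩ ⋃ n, ((e n : G)⁻¹ * ·) ⁻¹' S n, inter_subset_left, ?_, fun x => ?_⟩
  · refine hK.inter (.iUnion fun n => (hF₀.1.inter ?_).preimage (measurable_const_mul _))
    exact .iInter fun m => .iInter fun _ => hK.compl.preimage (measurable_const_mul _)
  obtain ⟨f₀, ⟨hf₀, γ₀, hγ₀, hf₀x⟩, -⟩ := hF₀.2 x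
  have hhit : ∃ n, (e n : G) * f₀ ∈ K := by
    obtain ⟨γ, hγ, hγK⟩ := hKrep f₀
    obtain ⟨n, hn⟩ := he ⟨γ, hγ⟩
    exact ⟨n, by rwa [hn]⟩
  classical
  refine ⟨e (Nat.find hhit) * f₀,
    ⟨⟨Nat.find_spec hhit, mem_iUnion.2 ⟨Nat.find hhit, ?_⟩⟩, e (Nat.find hhit) * γ₀,
      Γ.mul_mem (e _).2 hγ₀, by rw [mul_assoc, ← hf₀x]⟩, ?_⟩
  · simpa [S, hf₀] using fun m hm => Nat.find_min hhit hm
  rintro y ⟨⟨hyK, hyS⟩, γ, hγ, rfl⟩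
  obtain ⟨n, hnF₀, hnmin⟩ : ∃ n, (e n : G)⁻¹ * (γ * x) ∈ F₀ ∧
      ∀ m < n, (e m : G) * ((e n : G)⁻¹ * (γ * x)) ∉ K := by
    simpa [S] using hyS
  have hy : (e n : G)⁻¹ * (γ * x) = f₀ := by
    refine hF₀.eq_of_mem hf₀ hnF₀ ?_
    have hmul : (e n : G)⁻¹ * (γ * x) * (γ₀ * x)⁻¹ = (e n : G)⁻¹ * γ * γ₀⁻¹ :=
      by group
    rw [hf₀x, hmul]
    exact Γ.mul_mem (Γ.mul_mem (Γ.inv_mem (e n).2) hγ) (Γ.inv_mem hγ₀)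
  have hyx : γ * x = e n * f₀ := by rw [← hy, mul_inv_cancel_left]
  rw [hy] at hnmin
  rw [hyx, ← (Nat.find_eq_iff hhit).2 ⟨hyx ▸ hyK, hnmin⟩]

end IsFundamentalSet

theorem stmt18_general (G : Type*) [Group G] [TopologicalSpace G] [IsTopologicalGroup G]
    [LocallyCompactSpace G] [MeasurableSpace G] [BorelSpace G]
    (Γ : Subgroup G) [Countable Γ]
    (hex : ∃ F₀ : Set G, IsFundamentalSet Γ F₀) :
    CompactSpace (Quotient (QuotientGroup.rightRel Γ)) ↔
      ∃ F : Set G, IsFundamentalSet Γ F ∧ IsCompact (closure F) := by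
  obtain ⟨F₀, hF₀⟩ := hex
  have hπ : IsOpenQuotientMap (Quotient.mk (QuotientGroup.rightRel Γ)) :=
    MulAction.isOpenQuotientMap_quotientMk
  constructor
  · intro
    obtain ⟨K, hK, hKπ⟩ := hπ.isOpenMap.exists_isCompact_image_eq_univ hπ.surjective
    obtain ⟨F, hFK, hF⟩ := hF₀.exists_subset isClosed_closure.measurableSet fun x =>
      (QuotientGroup.exists_mul_mem_of_image_mk_eq_univ hKπ x).imp
        fun _ ⟨hγ, hγK⟩ => ⟨hγ, subset_closure hγK⟩
    exact ⟨F, hF, hK.closure.of_isClosed_subset isClosed_closure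
      (closure_minimal hFK isClosed_closure)⟩
  · rintro ⟨F, hF, hFc⟩
    have hcover : Quotient.mk _ '' closure F = univ :=
      eq_univ_of_univ_subset (hF.image_mk_eq_univ ▸ image_mono subset_closure)
    exact ⟨hcover ▸ hFc.image hπ.continuous⟩

/-- Let `G` be a locally compact (Hausdorff) topological group
with its Borel σ-algebra and `Γ` a countable discrete subgroup admitting a
measurable fundamental set.  Then the quotient `Γ\G` (the space of orbits of the
left translation action, with the quotient topology) is compact if and only if
there exists a relatively compact measurable fundamental set `F ⊆ G`. -/
theorem stmt18 (G : Type*) [Group G] [TopologicalSpace G] [IsTopologicalGroup G]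
    [T2Space G] [LocallyCompactSpace G] [MeasurableSpace G] [BorelSpace G]
    (Γ : Subgroup G) [Countable Γ] [DiscreteTopology Γ]
    (hex : ∃ F₀ : Set G, IsFundamentalSet Γ F₀) :
    CompactSpace (Quotient (QuotientGroup.rightRel Γ)) ↔
      ∃ F : Set G, IsFundamentalSet Γ F ∧ IsCompact (closure F) :=
  stmt18_general G Γ hex
end
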